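/- Let β ∈ (0,1) be given and fixed. There exist constants c₁, c₂ > 0 depending only on α and β such that for every integer n ≥ 1: (i) sup_{x ∈ [a_{βn}, ∞)} ψ_n(x) ≤ c₁ · a_n · n^{−2/3}; and (ii) for every x ∈ S_{βn} = [0, a_{βn}], ψ_n(x) ≤ c₂ · (√(a_n)/n) · √(x + a_n n^{−2}). -/

import Mathlib

open MeasureTheory Polynomial

/-- Mhaskar–Rakhmanov–Saff numbers for the weight `√w`, `w(z) = exp(-z^α)` on `[0, ∞)`. -/
noncomputable def mrsH (α t : ℝ) : ℝ :=
  t ^ (1 / α) * (2 * Real.sqrt Real.pi * Real.Gamma α / Real.Gamma (α + 1 / 2)) ^ (1 / α)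

/-- `η_n = (α n)^{-2/3}`. -/
noncomputable def etaH (α : ℝ) (n : ℕ) : ℝ := (α * n) ^ (-(2 / 3) : ℝ)

/-- The inner formula of the auxiliary function `ψ_n` on the half line. -/
noncomputable def psiAuxH (α : ℝ) (n : ℕ) (x : ℝ) : ℝ :=
  (mrsH α (2 * (n : ℝ)) - x) * Real.sqrt (x + mrsH α n / (n : ℝ) ^ 2) /
    ((n : ℝ) * Real.sqrt (mrsH α n - x + mrsH α n * etaH α n))

/-- The auxiliary function `ψ_n` on the half line: the inner formula on `[0, a_n]`,
the value `ψ_n(a_n)` for `x > a_n`, and the value `ψ_n(0)` for `x < 0`. -/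
noncomputable def psiH (α : ℝ) (n : ℕ) (x : ℝ) : ℝ :=
  if x < 0 then psiAuxH α n 0
  else if x ≤ mrsH α n then psiAuxH α n x
  else psiAuxH α n (mrsH α n)

/-! Since `a_t = t^{1/α} a_1`, we have `a_{2n} = 2^{1/α} a_n` and `a_{βn} = β^{1/α} a_n`, so after
bounding the numerator of `ψ_n` by `a_{2n} √(x + a_n n⁻²)` only the denominator matters.
Near the endpoint `a_n` it is at least `n √(a_n η_n)`, which produces the factor
`1 / (n √η_n) = α^{1/3} n^{-2/3}`; on `[0, a_{βn}]` it is at least `n √((1 - β^{1/α}) a_n)`. -/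

open Real

lemma mrsH_pos {α t : ℝ} (hα : 0 < α) (ht : 0 < t) : 0 < mrsH α t := by
  have := Gamma_pos_of_pos hα
  have := Gamma_pos_of_pos (by linarith : 0 < α + 1 / 2)
  have := sqrt_pos.mpr pi_pos
  unfold mrsH
  positivity

lemma mrsH_mul (α : ℝ) {s t : ℝ} (hs : 0 ≤ s) (ht : 0 ≤ t) :
    mrsH α (s * t) = s ^ (1 / α) * mrsH α t := by
  unfold mrsH
  rw [mul_rpow hs ht]
  ring

lemma mrsH_mul_lt {α β t : ℝ} (hα : 0 < α) (hβ0 : 0 < β) (hβ1 : β < 1) (ht : 0 < t) :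
    mrsH α (β * t) < mrsH α t := by
  rw [mrsH_mul α hβ0.le ht.le]
  exact mul_lt_of_lt_one_left (mrsH_pos hα ht) (rpow_lt_one hβ0.le hβ1 (by positivity))

lemma psiH_eq_psiAuxH_min {α x : ℝ} (n : ℕ) (hx : 0 ≤ x) :
    psiH α n x = psiAuxH α n (min x (mrsH α n)) := by
  unfold psiH
  rw [if_neg hx.not_gt]
  split_ifs with h
  · rw [min_eq_left h]
  · rw [min_eq_right (not_le.mp h).le]

lemma etaH_pos {α : ℝ} (hα : 0 < α) {n : ℕ} (hn : 0 < n) : 0 < etaH α n :=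
  rpow_pos_of_pos (by positivity) _

lemma one_div_mul_sqrt_etaH {α : ℝ} (hα : 0 < α) {n : ℕ} (hn : 0 < n) :
    1 / (n * √(etaH α n)) = α ^ ((1 : ℝ) / 3) * (n : ℝ) ^ (-(2 / 3) : ℝ) := by
  have hn0 : (0 : ℝ) < n := by exact_mod_cast hn
  have hsqrt : √(etaH α n) = (α * n) ^ (-(1 / 3) : ℝ) := by
    rw [etaH, sqrt_eq_rpow, ← rpow_mul (by positivity)]
    norm_num
  rw [hsqrt, rpow_neg (by positivity), mul_rpow hα.le hn0.le, rpow_neg hn0.le]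
  have : (0 : ℝ) < n ^ ((1 : ℝ) / 3) := by positivity
  field_simp
  rw [← rpow_add hn0]
  norm_num

lemma psiAuxH_le_of_le_radicand {α : ℝ} (hα : 0 < α) {n : ℕ} (hn : 0 < n) {x D : ℝ}
    (hx : 0 ≤ x) (hD : 0 < D) (hDle : D ≤ mrsH α n - x + mrsH α n * etaH α n) :
    psiAuxH α n x ≤ mrsH α (2 * n) * √(x + mrsH α n / (n : ℝ) ^ 2) / (n * √D) := by
  have hn0 : (0 : ℝ) < n := by exact_mod_cast hn
  have h2n : 0 < mrsH α (2 * n) := mrsH_pos hα (by positivity)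
  refine div_le_div₀ (by positivity) ?_ (by positivity)
    (mul_le_mul_of_nonneg_left (sqrt_le_sqrt hDle) hn0.le)
  exact mul_le_mul_of_nonneg_right (by linarith) (sqrt_nonneg _)

lemma psiAuxH_le_of_le_mrsH {α : ℝ} (hα : 0 < α) {n : ℕ} (hn : 0 < n) {x : ℝ}
    (hx0 : 0 ≤ x) (hxn : x ≤ mrsH α n) :
    psiAuxH α n x ≤
      (2 ^ (1 / α) * √2 * α ^ ((1 : ℝ) / 3)) * mrsH α n * (n : ℝ) ^ (-(2 / 3) : ℝ) := by
  have hn1 : (1 : ℝ) ≤ n := by exact_mod_cast hn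
  have han := mrsH_pos hα (by positivity : (0 : ℝ) < n)
  have hη := etaH_pos hα hn
  have hnum : √(x + mrsH α n / (n : ℝ) ^ 2) ≤ √2 * √(mrsH α n) := by
    rw [← sqrt_mul zero_le_two]
    refine sqrt_le_sqrt ?_
    have : mrsH α n / (n : ℝ) ^ 2 ≤ mrsH α n := div_le_self han.le (one_le_pow₀ hn1)
    linarith
  calc psiAuxH α n x
      ≤ mrsH α (2 * n) * √(x + mrsH α n / (n : ℝ) ^ 2) / (n * √(mrsH α n * etaH α n)) :=
        psiAuxH_le_of_le_radicand hα hn hx0 (by positivity) (by linarith)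
    _ ≤ 2 ^ (1 / α) * mrsH α n * (√2 * √(mrsH α n)) / (n * √(mrsH α n * etaH α n)) := by
        rw [mrsH_mul α zero_le_two (Nat.cast_nonneg n)]
        gcongr
    _ = 2 ^ (1 / α) * √2 * mrsH α n * (1 / (n * √(etaH α n))) := by
        rw [sqrt_mul han.le]
        have : 0 < √(mrsH α n) := sqrt_pos.mpr han
        field_simp
    _ = _ := by
        rw [one_div_mul_sqrt_etaH hα hn]
        ring

lemma psiAuxH_le_of_le_mrsH_mul {α β : ℝ} (hα : 0 < α) (hβ0 : 0 < β) (hβ1 : β < 1)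
    {n : ℕ} (hn : 0 < n) {x : ℝ} (hx0 : 0 ≤ x) (hxb : x ≤ mrsH α (β * n)) :
    psiAuxH α n x ≤ (2 ^ (1 / α) / √(1 - β ^ (1 / α))) *
      (√(mrsH α n) / n) * √(x + mrsH α n / (n : ℝ) ^ 2) := by
  have hn0 : (0 : ℝ) < n := by exact_mod_cast hn
  have han := mrsH_pos hα hn0
  have hη := etaH_pos hα hn
  have hgap : 0 < 1 - β ^ (1 / α) := sub_pos.mpr (rpow_lt_one hβ0.le hβ1 (by positivity))
  rw [mrsH_mul α hβ0.le hn0.le] at hxb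
  calc psiAuxH α n x
      ≤ mrsH α (2 * n) * √(x + mrsH α n / (n : ℝ) ^ 2) /
          (n * √((1 - β ^ (1 / α)) * mrsH α n)) :=
        psiAuxH_le_of_le_radicand hα hn hx0 (by positivity) (by nlinarith)
    _ = _ := by
        rw [mrsH_mul α zero_le_two hn0.le, sqrt_mul hgap.le]
        have : 0 < √(1 - β ^ (1 / α)) := sqrt_pos.mpr hgap
        have hsq := mul_self_sqrt han.le
        field_simp
        linear_combination -hsq

/-- for `w(z) = exp(-z^α)`, `α > 1/2` on `[0,∞)`, and fixed `β ∈ (0,1)`, there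
are `c₁, c₂ > 0` depending only on `α, β` such that for all `n ≥ 1`:
(i) `sup_{x ∈ [a_{βn}, ∞)} ψ_n(x) ≤ c₁ a_n n^{-2/3}`;
(ii) `ψ_n(x) ≤ c₂ (√a_n / n) √(x + a_n n⁻²)` for all `x ∈ S_{βn} = [0, a_{βn}]`. -/
theorem stmt_16 (α : ℝ) (hα : 1 / 2 < α) (β : ℝ) (hβ0 : 0 < β) (hβ1 : β < 1) :
    ∃ c₁ : ℝ, 0 < c₁ ∧ ∃ c₂ : ℝ, 0 < c₂ ∧ ∀ n : ℕ, 1 ≤ n →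
      (∀ x ∈ Set.Ici (mrsH α (β * n)),
        psiH α n x ≤ c₁ * mrsH α n * (n : ℝ) ^ (-(2 / 3) : ℝ))
      ∧ (∀ x ∈ Set.Icc (0 : ℝ) (mrsH α (β * n)),
        psiH α n x ≤ c₂ * (Real.sqrt (mrsH α n) / n) * Real.sqrt (x + mrsH α n / (n : ℝ) ^ 2)) := by
  have hα0 : 0 < α := by linarith
  have hgap : 0 < 1 - β ^ (1 / α) := sub_pos.mpr (rpow_lt_one hβ0.le hβ1 (by positivity))
  refine ⟨2 ^ (1 / α) * √2 * α ^ ((1 : ℝ) / 3), by positivity,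
    2 ^ (1 / α) / √(1 - β ^ (1 / α)), by positivity, fun n hn => ⟨fun x hx => ?_, ?_⟩⟩
  · have hx0 : 0 ≤ x := (mrsH_pos hα0 (by positivity)).le.trans hx
    rw [psiH_eq_psiAuxH_min n hx0]
    exact psiAuxH_le_of_le_mrsH hα0 hn (le_min hx0 (mrsH_pos hα0 (by positivity)).le)
      (min_le_right _ _)
  · rintro x ⟨hx0, hxb⟩
    have hxn : x ≤ mrsH α n := hxb.trans (mrsH_mul_lt hα0 hβ0 hβ1 (by positivity)).le
    rw [psiH_eq_psiAuxH_min n hx0, min_eq_left hxn]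
    exact psiAuxH_le_of_le_mrsH_mul hα0 hβ0 hβ1 hn hx0 hxb
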